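/- If a labeled rooted forest σ on n = m + k vertices is a disjoint union τ ∪ ν of labeled rooted forests τ on m vertices and ν on k vertices sharing no isomorphic connected component, then the orbit representation satisfies o(σ) ≅ Ind_{S_m × S_k}^{S_n} (o(τ) ⊠ o(ν)); equivalently ch(o(σ)) = ch(o(τ)) · ch(o(ν)). -/

import Mathlib

/-- Iterate of a partial transformation on `Fin n`. -/
def iterPT {n : ℕ} (f : Fin n → Option (Fin n)) : ℕ → Fin n → Option (Fin n)
  | 0 => fun x => some x
  | k + 1 => fun x => (f x).bind (iterPT f k)

/-- A partial transformation is nilpotent iff its digraph has no directed cycle. -/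
def Nilp {n : ℕ} (f : Fin n → Option (Fin n)) : Prop :=
  ∀ (x : Fin n) (k : ℕ), 0 < k → iterPT f k x ≠ some x

/-- Cardinality of the domain of a partial transformation. -/
def domcard {n : ℕ} (f : Fin n → Option (Fin n)) : ℕ :=
  (Finset.univ.filter fun i => (f i).isSome).card

/-- Conjugation action of the symmetric group on partial transformations. -/
def conjPT {n : ℕ} (w : Equiv.Perm (Fin n)) (f : Fin n → Option (Fin n)) :
    Fin n → Option (Fin n) := fun x => (f (w⁻¹ x)).map w

/-- Disjoint union of a forest on `[m]` and a forest on `[k]`, on `[m+k]`. -/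
def joinPT {m k : ℕ} (f : Fin m → Option (Fin m)) (g : Fin k → Option (Fin k)) :
    Fin (m+k) → Option (Fin (m+k)) := fun x =>
  if h : x.val < m then (f ⟨x.val, h⟩).map (Fin.castLE (Nat.le_add_right m k))
  else (g ⟨x.val - m, by omega⟩).map (fun j => ⟨m + j.val, by omega⟩)

/-- `z` is a descendant of `a` in the forest of `f`. -/
def Desc {n : ℕ} (f : Fin n → Option (Fin n)) (z a : Fin n) : Prop :=
  ∃ j : ℕ, iterPT f j z = some a

/-!
An automorphism `u` of the forest `σ = τ ∪ ν` (a permutation with `u · σ = σ`) sends a root of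
`τ` to a root whose subtree is isomorphic to the subtree of the original one. Since `τ` is
acyclic, every vertex of `τ` lies below a root of `τ`; if `u` moved it into the `ν`-part, that
root would be sent to a root of `ν` with an isomorphic subtree, which the hypothesis excludes.
So the stabilizer of `σ` in `S_{m+k}` lies in the Young subgroup `H = S_m × S_k`. The `H`-orbit
of `σ` is the product of the orbits of `τ` and `ν`, and for a transitive action whose point
stabilizer lies in `H` the orbit is induced from the `H`-orbit, which gives the character formula.
-/

open Equiv MulAction

namespace MulAction

variable {G X : Type*} [Group G] [MulAction G X] {H : Subgroup G} {x : X}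

lemma mem_of_smul_mem_orbit_subgroup (hx : stabilizer G x ≤ H) {g : G}
    (hg : g • x ∈ orbit H x) : g ∈ H := by
  obtain ⟨h, hh⟩ := mem_orbit_iff.mp hg
  have hstab : (h : G)⁻¹ * g ∈ stabilizer G x := by
    rw [mem_stabilizer_iff, mul_smul, ← hh, Subgroup.smul_def, inv_smul_smul]
  simpa using H.mul_mem h.2 (hx hstab)

lemma mem_of_mem_orbit_subgroup_of_smul_eq (hx : stabilizer G x ≤ H) {y : X}
    (hy : y ∈ orbit H x) {g : G} (hg : g • y = y) : g ∈ H := by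
  obtain ⟨h, rfl⟩ := hy
  have hgh : g * h ∈ H :=
    mem_of_smul_mem_orbit_subgroup hx ⟨h, by rw [mul_smul, ← Subgroup.smul_def, hg]⟩
  simpa using H.mul_mem hgh (H.inv_mem h.2)

theorem card_mul_card_orbit_inter_fixedBy [Fintype G] [DecidablePred (· ∈ H)]
    (hx : stabilizer G x ≤ H) (w : G) :
    Nat.card H * Nat.card ↥(orbit G x ∩ fixedBy X w) =
      ∑ t : G, if t⁻¹ * w * t ∈ H then Nat.card ↥(orbit H x ∩ fixedBy X (t⁻¹ * w * t)) else 0 := by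
  have hite : ∀ t : G, (if t⁻¹ * w * t ∈ H then Nat.card ↥(orbit H x ∩ fixedBy X (t⁻¹ * w * t))
      else 0) = Nat.card ↥(orbit H x ∩ fixedBy X (t⁻¹ * w * t)) := by
    intro t
    refine ite_eq_left_iff.mpr fun hw => ?_
    have : IsEmpty ↥(orbit H x ∩ fixedBy X (t⁻¹ * w * t)) :=
      ⟨fun y => hw (mem_of_mem_orbit_subgroup_of_smul_eq hx y.2.1 y.2.2)⟩
    exact Nat.card_of_isEmpty.symm
  have : ∀ t : G, Finite ↥(orbit H x ∩ fixedBy X (t⁻¹ * w * t)) := fun t =>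
    ((Finite.finite_mulAction_orbit x).subset Set.inter_subset_left).to_subtype
  rw [Finset.sum_congr rfl fun t _ => hite t, ← Nat.card_prod, ← Nat.card_sigma]
  let s : X → G := Function.invFun (· • x)
  have hs : ∀ y ∈ orbit G x, s y • x = y := fun y hy => Function.invFun_eq (mem_orbit_iff.mp hy)
  refine Nat.card_congr
    { toFun := fun p => ⟨s p.2 * (p.1 : G)⁻¹, p.1 • x, mem_orbit x p.1, ?_⟩
      invFun := fun q =>
        let y : ↥(orbit G x ∩ fixedBy X w) :=
          ⟨q.1 • q.2.1, mem_orbit_of_mem_orbit q.1 (orbit_subgroup_subset H x q.2.2.1), ?_⟩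
        (⟨q.1⁻¹ * s y, mem_of_smul_mem_orbit_subgroup hx ?_⟩, y)
      left_inv := ?_
      right_inv := ?_ }
  · obtain ⟨h, y, hyx, hyw⟩ := p
    rw [mem_fixedBy, Subgroup.smul_def]
    simp only [mul_inv_rev, inv_inv, mul_smul, inv_smul_smul]
    rw [hs y hyx, mem_fixedBy.mp hyw, inv_smul_eq_iff.mpr (hs y hyx).symm]
  · obtain ⟨t, z, -, hz⟩ := q
    rwa [mem_fixedBy, mul_smul, mul_smul, inv_smul_eq_iff] at hz
  · rw [mul_smul, hs _ y.2.1, inv_smul_smul]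
    exact q.2.2.1
  · rintro ⟨h, y, hyx, hyw⟩
    have hy : (s y * (h : G)⁻¹) • (h • x) = y := by
      rw [Subgroup.smul_def, smul_smul, inv_mul_cancel_right, hs y hyx]
    refine Prod.ext (Subtype.ext ?_) (Subtype.ext hy)
    simp only [hy]
    group
  · rintro ⟨t, z, hzx, hzw⟩
    have hz : t • z ∈ orbit G x := mem_orbit_of_mem_orbit t (orbit_subgroup_subset H x hzx)
    refine Sigma.subtype_ext ?_ ?_
    · simp only
      group
    · change (t⁻¹ * s (t • z)) • x = z
      rw [mul_smul, hs _ hz, inv_smul_smul]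

end MulAction

section PartialTransformation

variable {n n' n'' : ℕ}

lemma iterPT_add (f : Fin n → Option (Fin n)) (i j : ℕ) (z : Fin n) :
    iterPT f (i + j) z = (iterPT f i z).bind (iterPT f j) := by
  induction i generalizing z with
  | zero => simp [iterPT]
  | succ i ih =>
    rw [Nat.add_right_comm]
    simp only [iterPT, ih, Option.bind_assoc]

lemma iterPT_map {f : Fin n → Option (Fin n)} {g : Fin n' → Option (Fin n')} {φ : Fin n → Fin n'}
    (hφ : ∀ z, g (φ z) = (f z).map φ) (j : ℕ) (z : Fin n) :
    iterPT g j (φ z) = (iterPT f j z).map φ := by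
  induction j generalizing z with
  | zero => rfl
  | succ j ih =>
    simp only [iterPT, hφ]
    cases f z <;> simp [ih]

lemma Nilp.exists_root {f : Fin n → Option (Fin n)} (hf : Nilp f) (z : Fin n) :
    ∃ a, Desc f z a ∧ f a = none := by
  by_contra! hroot
  have hpath : ∀ j, ∃ a, iterPT f j z = some a := by
    intro j
    induction j with
    | zero => exact ⟨z, rfl⟩
    | succ j ih =>
      obtain ⟨a, ha⟩ := ih
      obtain ⟨b, hb⟩ := Option.ne_none_iff_exists'.mp (hroot a ⟨j, ha⟩)
      exact ⟨b, by rw [iterPT_add, ha, Option.bind_some]; simpa [iterPT] using hb⟩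
  choose p hp using hpath
  obtain ⟨i, j, hne, hij⟩ := Finite.exists_ne_map_eq_of_infinite p
  wlog hlt : i < j generalizing i j
  · exact this j i hne.symm hij.symm (by omega)
  have hcycle := iterPT_add f i (j - i) z
  rw [Nat.add_sub_cancel' hlt.le, hp, hp, hij, Option.bind_some] at hcycle
  exact hf (p j) (j - i) (by omega) hcycle.symm

lemma desc_map_iff {f : Fin n → Option (Fin n)} {g : Fin n' → Option (Fin n')} {φ : Fin n → Fin n'}
    (hφ : ∀ z, g (φ z) = (f z).map φ) (hinj : Function.Injective φ) {z a : Fin n} :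
    Desc g (φ z) (φ a) ↔ Desc f z a := by
  simp [Desc, iterPT_map hφ, hinj.eq_iff]

def SubtreeIso (f : Fin n → Option (Fin n)) (a : Fin n) (g : Fin n' → Option (Fin n'))
    (b : Fin n') : Prop :=
  ∃ e : {z // Desc f z a} ≃ {z // Desc g z b},
    ∀ p q : {z // Desc f z a}, f p.1 = some q.1 ↔ g (e p).1 = some (e q).1

lemma SubtreeIso.symm {f : Fin n → Option (Fin n)} {a : Fin n} {g : Fin n' → Option (Fin n')}
    {b : Fin n'} (h : SubtreeIso f a g b) : SubtreeIso g b f a := by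
  obtain ⟨e, he⟩ := h
  exact ⟨e.symm, fun p q => by simpa using (he (e.symm p) (e.symm q)).symm⟩

lemma SubtreeIso.trans {f : Fin n → Option (Fin n)} {a : Fin n} {g : Fin n' → Option (Fin n')}
    {b : Fin n'} {h : Fin n'' → Option (Fin n'')} {c : Fin n''}
    (hfg : SubtreeIso f a g b) (hgh : SubtreeIso g b h c) : SubtreeIso f a h c := by
  obtain ⟨e, he⟩ := hfg
  obtain ⟨e', he'⟩ := hgh
  exact ⟨e.trans e', fun p q => (he p q).trans (he' (e p) (e q))⟩

lemma subtreeIso_map {f : Fin n → Option (Fin n)} {g : Fin n' → Option (Fin n')}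
    {φ : Fin n → Fin n'} (hφ : ∀ z, g (φ z) = (f z).map φ) (hinj : Function.Injective φ)
    {a : Fin n} (hrange : ∀ y, Desc g y (φ a) → ∃ z, φ z = y) : SubtreeIso f a g (φ a) := by
  refine ⟨Equiv.ofBijective (fun p => ⟨φ p, (desc_map_iff hφ hinj).mpr p.2⟩) ⟨?_, ?_⟩,
    fun p q => ?_⟩
  · intro p q hpq
    exact Subtype.ext (hinj (congrArg Subtype.val hpq))
  · rintro ⟨y, hy⟩
    obtain ⟨z, rfl⟩ := hrange y hy
    exact ⟨⟨z, (desc_map_iff hφ hinj).mp hy⟩, rfl⟩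
  · change f p = some q ↔ g (φ p) = some (φ q)
    simp [hφ, hinj.eq_iff]

lemma conjPT_one (f : Fin n → Option (Fin n)) : conjPT 1 f = f := by
  funext x
  simp [conjPT]

lemma conjPT_mul (u v : Perm (Fin n)) (f : Fin n → Option (Fin n)) :
    conjPT (u * v) f = conjPT u (conjPT v f) := by
  funext x
  simp [conjPT, Option.map_map, Function.comp_def, Perm.mul_apply]

lemma conjPT_inv_eq_self {u : Perm (Fin n)} {f : Fin n → Option (Fin n)} (h : conjPT u f = f) :
    conjPT u⁻¹ f = f := by
  calc conjPT u⁻¹ f = conjPT u⁻¹ (conjPT u f) := by rw [h]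
    _ = f := by rw [← conjPT_mul, inv_mul_cancel, conjPT_one]

lemma apply_perm_of_conjPT_eq_self {u : Perm (Fin n)} {f : Fin n → Option (Fin n)}
    (h : conjPT u f = f) (z : Fin n) : f (u z) = (f z).map u := by
  simpa [conjPT] using (congrFun h (u z)).symm

abbrev conjAction (n : ℕ) : MulAction (Perm (Fin n)) (Fin n → Option (Fin n)) where
  smul := conjPT
  one_smul := conjPT_one
  mul_smul := conjPT_mul

end PartialTransformation

section Join

variable {m k : ℕ}

lemma joinPT_castAdd (f : Fin m → Option (Fin m)) (g : Fin k → Option (Fin k)) (z : Fin m) :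
    joinPT f g (Fin.castAdd k z) = (f z).map (Fin.castAdd k) :=
  dif_pos z.2

lemma joinPT_natAdd (f : Fin m → Option (Fin m)) (g : Fin k → Option (Fin k)) (z : Fin k) :
    joinPT f g (Fin.natAdd m z) = (g z).map (Fin.natAdd m) := by
  simp only [joinPT, Fin.val_natAdd, add_lt_iff_neg_left, not_lt_zero, ↓reduceDIte,
    add_tsub_cancel_left, Fin.eta]
  rfl

lemma exists_natAdd_eq_of_not_lt {x : Fin (m + k)} (hx : ¬ x.val < m) :
    ∃ y : Fin k, Fin.natAdd m y = x :=
  ⟨⟨x - m, by omega⟩, Fin.ext (by simp; omega)⟩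

lemma val_lt_of_desc_castAdd {f : Fin m → Option (Fin m)} {g : Fin k → Option (Fin k)}
    {z : Fin m} {x : Fin (m + k)} (h : Desc (joinPT f g) (Fin.castAdd k z) x) : x.val < m := by
  obtain ⟨j, hj⟩ := h
  rw [iterPT_map (joinPT_castAdd f g)] at hj
  obtain ⟨y, -, rfl⟩ := Option.map_eq_some_iff.mp hj
  simp

lemma le_val_of_desc_natAdd {f : Fin m → Option (Fin m)} {g : Fin k → Option (Fin k)}
    {z : Fin k} {x : Fin (m + k)} (h : Desc (joinPT f g) (Fin.natAdd m z) x) : m ≤ x.val := by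
  obtain ⟨j, hj⟩ := h
  rw [iterPT_map (joinPT_natAdd f g)] at hj
  obtain ⟨y, -, rfl⟩ := Option.map_eq_some_iff.mp hj
  simp

lemma subtreeIso_castAdd (f : Fin m → Option (Fin m)) (g : Fin k → Option (Fin k)) (a : Fin m) :
    SubtreeIso f a (joinPT f g) (Fin.castAdd k a) := by
  refine subtreeIso_map (joinPT_castAdd f g) (Fin.castAdd_injective m k) fun y hy => ?_
  by_cases hlt : y.val < m
  · exact ⟨⟨y, hlt⟩, rfl⟩
  · obtain ⟨y, rfl⟩ := exists_natAdd_eq_of_not_lt hlt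
    exact absurd (le_val_of_desc_natAdd hy) (not_le.mpr a.2)

lemma subtreeIso_natAdd (f : Fin m → Option (Fin m)) (g : Fin k → Option (Fin k)) (b : Fin k) :
    SubtreeIso g b (joinPT f g) (Fin.natAdd m b) := by
  refine subtreeIso_map (joinPT_natAdd f g) (Fin.natAdd_injective k m) fun y hy => ?_
  by_cases hlt : y.val < m
  · exact absurd (val_lt_of_desc_castAdd (z := ⟨y, hlt⟩) hy) (not_lt.mpr (Nat.le_add_right m b))
  · exact exists_natAdd_eq_of_not_lt hlt

def joinPerm (vx : Perm (Fin m)) (vy : Perm (Fin k)) : Perm (Fin (m + k)) :=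
  finSumFinEquiv.permCongr (vx.sumCongr vy)

@[simp]
lemma joinPerm_castAdd (vx : Perm (Fin m)) (vy : Perm (Fin k)) (z : Fin m) :
    joinPerm vx vy (Fin.castAdd k z) = Fin.castAdd k (vx z) := by
  simp [joinPerm, permCongr_apply]

@[simp]
lemma joinPerm_natAdd (vx : Perm (Fin m)) (vy : Perm (Fin k)) (z : Fin k) :
    joinPerm vx vy (Fin.natAdd m z) = Fin.natAdd m (vy z) := by
  simp [joinPerm, permCongr_apply]

lemma joinPerm_inv (vx : Perm (Fin m)) (vy : Perm (Fin k)) :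
    (joinPerm vx vy)⁻¹ = joinPerm vx⁻¹ vy⁻¹ := by
  rw [inv_eq_iff_mul_eq_one]
  ext x
  induction x using Fin.addCases <;> simp

lemma conjPT_joinPerm (vx : Perm (Fin m)) (vy : Perm (Fin k)) (f : Fin m → Option (Fin m))
    (g : Fin k → Option (Fin k)) :
    conjPT (joinPerm vx vy) (joinPT f g) = joinPT (conjPT vx f) (conjPT vy g) := by
  funext x
  induction x using Fin.addCases <;>
    simp [conjPT, joinPerm_inv, joinPT_castAdd, joinPT_natAdd, Option.map_map, Function.comp_def]

def blockSubgroup (m k : ℕ) : Subgroup (Perm (Fin (m + k))) where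
  carrier := {v | ∀ x, (v x).val < m ↔ x.val < m}
  mul_mem' ha hb x := (ha _).trans (hb x)
  one_mem' _ := Iff.rfl
  inv_mem' {v} hv x := by simpa using (hv (v⁻¹ x)).symm

lemma mem_blockSubgroup_iff {v : Perm (Fin (m + k))} :
    v ∈ blockSubgroup m k ↔ ∃ vx vy, joinPerm vx vy = v := by
  constructor
  · intro hv
    have hmaps : Set.MapsTo (finSumFinEquiv.symm.permCongr v) (Set.range Sum.inl)
        (Set.range Sum.inl) := by
      rintro _ ⟨a, rfl⟩
      have hlt : (v (Fin.castAdd k a)).val < m := (hv (Fin.castAdd k a)).mpr a.2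
      refine ⟨Fin.castLT _ hlt, ?_⟩
      rw [← finSumFinEquiv_symm_apply_castAdd, Fin.castAdd_castLT]
      rfl
    obtain ⟨⟨vx, vy⟩, hvxy⟩ := Perm.mem_sumCongrHom_range_of_perm_mapsTo_inl hmaps
    refine ⟨vx, vy, ?_⟩
    rw [Perm.sumCongrHom_apply] at hvxy
    rw [joinPerm, hvxy, ← permCongr_symm, apply_symm_apply]
  · rintro ⟨vx, vy, rfl⟩ x
    induction x using Fin.addCases <;> simp

end Join

section Automorphism

variable {m k : ℕ} {τ : Fin m → Option (Fin m)} {ν : Fin k → Option (Fin k)}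

lemma val_castAdd_lt_of_conjPT_eq_self (hτ : Nilp τ)
    (hdisj : ¬ ∃ a b, τ a = none ∧ ν b = none ∧ SubtreeIso τ a ν b)
    {u : Perm (Fin (m + k))} (hu : conjPT u (joinPT τ ν) = joinPT τ ν) (z : Fin m) :
    (u (Fin.castAdd k z)).val < m := by
  have hσ := apply_perm_of_conjPT_eq_self hu
  by_contra hz
  obtain ⟨a, hza, ha⟩ := hτ.exists_root z
  obtain ⟨y, hy⟩ := exists_natAdd_eq_of_not_lt hz
  have hdesc : Desc (joinPT τ ν) (Fin.natAdd m y) (u (Fin.castAdd k a)) := by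
    rw [hy, desc_map_iff hσ u.injective,
      desc_map_iff (joinPT_castAdd τ ν) (Fin.castAdd_injective m k)]
    exact hza
  obtain ⟨b, hb⟩ := exists_natAdd_eq_of_not_lt (not_lt.mpr (le_val_of_desc_natAdd hdesc))
  refine hdisj ⟨a, b, ha, ?_, ?_⟩
  · have hroot := hσ (Fin.castAdd k a)
    rw [← hb, joinPT_natAdd, joinPT_castAdd, ha] at hroot
    simpa using hroot
  · have hu_subtree :
        SubtreeIso (joinPT τ ν) (Fin.castAdd k a) (joinPT τ ν) (Fin.natAdd m b) := by
      rw [hb]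
      exact subtreeIso_map hσ u.injective fun y _ => ⟨u.symm y, u.apply_symm_apply y⟩
    exact (subtreeIso_castAdd τ ν a).trans (hu_subtree.trans (subtreeIso_natAdd τ ν b).symm)

lemma mem_blockSubgroup_of_conjPT_eq_self (hτ : Nilp τ)
    (hdisj : ¬ ∃ a b, τ a = none ∧ ν b = none ∧ SubtreeIso τ a ν b)
    {u : Perm (Fin (m + k))} (hu : conjPT u (joinPT τ ν) = joinPT τ ν) :
    u ∈ blockSubgroup m k := by
  intro x
  constructor
  · intro hux
    simpa using val_castAdd_lt_of_conjPT_eq_self hτ hdisj (conjPT_inv_eq_self hu) ⟨u x, hux⟩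
  · intro hx
    exact val_castAdd_lt_of_conjPT_eq_self hτ hdisj hu ⟨x, hx⟩

end Automorphism

theorem stmt10_general {m k : ℕ} (τ : Fin m → Option (Fin m)) (ν : Fin k → Option (Fin k))
    (hτ : Nilp τ)
    (hdisj : ¬ ∃ (a : Fin m) (b : Fin k), τ a = none ∧ ν b = none ∧
      ∃ e : {z : Fin m // Desc τ z a} ≃ {z : Fin k // Desc ν z b},
        ∀ p q : {z : Fin m // Desc τ z a},
          τ p.1 = some q.1 ↔ ν (e p).1 = some (e q).1) :
    (∀ g : Fin (m+k) → Option (Fin (m+k)),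
      (∃ v : Equiv.Perm (Fin (m+k)), (∀ x : Fin (m+k), (v x).val < m ↔ x.val < m) ∧
          conjPT v (joinPT τ ν) = g) ↔
      (∃ (x : Fin m → Option (Fin m)) (y : Fin k → Option (Fin k)),
          (∃ vx : Equiv.Perm (Fin m), conjPT vx τ = x) ∧
          (∃ vy : Equiv.Perm (Fin k), conjPT vy ν = y) ∧ g = joinPT x y)) ∧
    ∀ w : Equiv.Perm (Fin (m+k)),
      Nat.card {u : Equiv.Perm (Fin (m+k)) // ∀ x : Fin (m+k), (u x).val < m ↔ x.val < m} *
        Nat.card {g : Fin (m+k) → Option (Fin (m+k)) //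
          (∃ v : Equiv.Perm (Fin (m+k)), conjPT v (joinPT τ ν) = g) ∧ conjPT w g = g} =
      ∑ t : Equiv.Perm (Fin (m+k)),
        if (∀ x : Fin (m+k), ((t⁻¹ * w * t) x).val < m ↔ x.val < m) then
          Nat.card {g : Fin (m+k) → Option (Fin (m+k)) //
            (∃ v : Equiv.Perm (Fin (m+k)),
                (∀ x : Fin (m+k), (v x).val < m ↔ x.val < m) ∧
                conjPT v (joinPT τ ν) = g) ∧
            conjPT (t⁻¹ * w * t) g = g}
        else 0 := by
  refine ⟨fun g => ⟨?_, ?_⟩, fun w => ?_⟩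
  · rintro ⟨v, hv, rfl⟩
    obtain ⟨vx, vy, rfl⟩ := mem_blockSubgroup_iff.mp hv
    exact ⟨_, _, ⟨vx, rfl⟩, ⟨vy, rfl⟩, conjPT_joinPerm vx vy τ ν⟩
  · rintro ⟨_, _, ⟨vx, rfl⟩, ⟨vy, rfl⟩, rfl⟩
    exact ⟨joinPerm vx vy, mem_blockSubgroup_iff.mpr ⟨vx, vy, rfl⟩, conjPT_joinPerm vx vy τ ν⟩
  · classical
    let _ := conjAction (m + k)
    have hstab : stabilizer (Perm (Fin (m + k))) (joinPT τ ν) ≤ blockSubgroup m k :=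
      fun u hu => mem_blockSubgroup_of_conjPT_eq_self hτ hdisj hu
    convert card_mul_card_orbit_inter_fixedBy hstab w using 3 with t
    · rfl
    · rfl
    · rfl
    · refine Nat.card_congr (Equiv.subtypeEquivRight fun g => ?_)
      simp only [Set.mem_inter_iff, mem_orbit_iff, Subtype.exists, Subgroup.mk_smul, mem_fixedBy,
        exists_prop]
      rfl

/-- if a labeled rooted forest σ on `n = m + k` vertices is the
disjoint union τ ∪ ν of forests having no isomorphic connected component in
common (no root `a` of τ and root `b` of ν carry isomorphic subtrees), then
`o(σ) ≅ Ind_{S_m × S_k}^{S_n} (o(τ) ⊠ o(ν))`, equivalently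
`ch o(σ) = ch o(τ) ⬝ ch o(ν)`.  We state this as:
(a) the `S_m × S_k`-orbit of σ is exactly `{joinPT x y : x ∈ o(τ), y ∈ o(ν)}`, and
(b) the character (fixed-point count) of the `S_{m+k}`-orbit of σ equals the
induced character from the Young subgroup `S_m × S_k`. -/
theorem stmt10 {m k : ℕ} (τ : Fin m → Option (Fin m)) (ν : Fin k → Option (Fin k))
    (hτ : Nilp τ) (hν : Nilp ν)
    (hdisj : ¬ ∃ (a : Fin m) (b : Fin k), τ a = none ∧ ν b = none ∧
      ∃ e : {z : Fin m // Desc τ z a} ≃ {z : Fin k // Desc ν z b},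
        ∀ p q : {z : Fin m // Desc τ z a},
          τ p.1 = some q.1 ↔ ν (e p).1 = some (e q).1) :
    (∀ g : Fin (m+k) → Option (Fin (m+k)),
      (∃ v : Equiv.Perm (Fin (m+k)), (∀ x : Fin (m+k), (v x).val < m ↔ x.val < m) ∧
          conjPT v (joinPT τ ν) = g) ↔
      (∃ (x : Fin m → Option (Fin m)) (y : Fin k → Option (Fin k)),
          (∃ vx : Equiv.Perm (Fin m), conjPT vx τ = x) ∧
          (∃ vy : Equiv.Perm (Fin k), conjPT vy ν = y) ∧ g = joinPT x y)) ∧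
    ∀ w : Equiv.Perm (Fin (m+k)),
      Nat.card {u : Equiv.Perm (Fin (m+k)) // ∀ x : Fin (m+k), (u x).val < m ↔ x.val < m} *
        Nat.card {g : Fin (m+k) → Option (Fin (m+k)) //
          (∃ v : Equiv.Perm (Fin (m+k)), conjPT v (joinPT τ ν) = g) ∧ conjPT w g = g} =
      ∑ t : Equiv.Perm (Fin (m+k)),
        if (∀ x : Fin (m+k), ((t⁻¹ * w * t) x).val < m ↔ x.val < m) then
          Nat.card {g : Fin (m+k) → Option (Fin (m+k)) //
            (∃ v : Equiv.Perm (Fin (m+k)),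
                (∀ x : Fin (m+k), (v x).val < m ↔ x.val < m) ∧
                conjPT v (joinPT τ ν) = g) ∧
            conjPT (t⁻¹ * w * t) g = g}
        else 0 :=
  stmt10_general τ ν hτ hdisj
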